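/- arXiv:quant-ph/0101033 — 3 statements merged into one kernel-verified Lean document; each statement's English description precedes it below -/
import Mathlib

section
/- Let ρ be an invertible density matrix on H1⊗H2 and E(A) = 1⊗Tr_1(γ* A γ) with γ = ρ^{1/2}(1⊗Tr_1ρ)^{-1/2}. Then the state ω_ρ(A) = Tr(ρA) is invariant under E, i.e. Tr(ρ E(A)) = Tr(ρ A) for all bounded A on H1⊗H2. -/
open Matrix Kronecker
open scoped ComplexOrder

/-- Partial trace over the first tensor factor. -/
noncomputable def ptrace1 {n m : ℕ} (M : Matrix (Fin n × Fin m) (Fin n × Fin m) ℂ) :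
    Matrix (Fin m) (Fin m) ℂ :=
  fun j i => ∑ k : Fin n, M (k, j) (k, i)

/-- Tensor product of vectors. -/
noncomputable def vecTens {n m : ℕ} (x : Fin n → ℂ) (y : Fin m → ℂ) : Fin n × Fin m → ℂ :=
  fun p => x p.1 * y p.2

/-- Rank-one operator `|y⟩⟨z|`. -/
noncomputable def ketbra {d : Type*} (y z : d → ℂ) : Matrix d d ℂ :=
  fun a b => y a * star (z b)

lemma trace_mul_one_kron {n m : ℕ} (M : Matrix (Fin n × Fin m) (Fin n × Fin m) ℂ)
    (B : Matrix (Fin m) (Fin m) ℂ) :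
    (M * ((1 : Matrix (Fin n) (Fin n) ℂ) ⊗ₖ B)).trace = (ptrace1 M * B).trace := by
  have key : ∀ k j, (M * ((1 : Matrix (Fin n) (Fin n) ℂ) ⊗ₖ B)) (k, j) (k, j)
      = ∑ i : Fin m, M (k, j) (k, i) * B i j := by
    intro k j
    rw [Matrix.mul_apply, Fintype.sum_prod_type, Finset.sum_comm]
    simp [Matrix.one_apply, mul_ite, Finset.sum_ite_eq']
  simp only [Matrix.trace, Matrix.diag, Fintype.sum_prod_type]
  simp only [key, ptrace1, Matrix.mul_apply, Finset.sum_mul]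
  rw [Finset.sum_comm]
  refine Finset.sum_congr rfl fun j _ => ?_
  rw [Finset.sum_comm]

lemma trace_one_kron_mul {n m : ℕ} (C : Matrix (Fin m) (Fin m) ℂ)
    (M : Matrix (Fin n × Fin m) (Fin n × Fin m) ℂ) :
    ((((1 : Matrix (Fin n) (Fin n) ℂ) ⊗ₖ C)) * M).trace = (C * ptrace1 M).trace := by
  rw [Matrix.trace_mul_comm, trace_mul_one_kron, Matrix.trace_mul_comm]

/-- `γ = ρ^{1/2} (1 ⊗ (Tr₁ρ))^{-1/2}`, given `s = ρ^{1/2}` and `w = (Tr₁ρ)^{-1/2}`. -/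
noncomputable def gammaOp {n m : ℕ} (s : Matrix (Fin n × Fin m) (Fin n × Fin m) ℂ)
    (w : Matrix (Fin m) (Fin m) ℂ) : Matrix (Fin n × Fin m) (Fin n × Fin m) ℂ :=
  s * ((1 : Matrix (Fin n) (Fin n) ℂ) ⊗ₖ w)

/-- The generalized conditional expectation `E(A) = 1 ⊗ Tr₁(γ* A γ)`. -/
noncomputable def Emap {n m : ℕ} (s : Matrix (Fin n × Fin m) (Fin n × Fin m) ℂ)
    (w : Matrix (Fin m) (Fin m) ℂ) (A : Matrix (Fin n × Fin m) (Fin n × Fin m) ℂ) :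
    Matrix (Fin n × Fin m) (Fin n × Fin m) ℂ :=
  (1 : Matrix (Fin n) (Fin n) ℂ) ⊗ₖ ptrace1 ((gammaOp s w)ᴴ * A * gammaOp s w)

/-- the state `ω_ρ` is invariant under `E`. -/
theorem Emap_state_invariant {n m : ℕ}
    (ρ s : Matrix (Fin n × Fin m) (Fin n × Fin m) ℂ) (w : Matrix (Fin m) (Fin m) ℂ)
    (hρ : ρ.PosDef) (htr : ρ.trace = 1)
    (hs : s.PosSemidef) (hss : s * s = ρ)
    (hw : w.PosSemidef) (hww : w * w * ptrace1 ρ = 1) :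
    ∀ A : Matrix (Fin n × Fin m) (Fin n × Fin m) ℂ,
      (ρ * Emap s w A).trace = (ρ * A).trace := by
  intro A
  have hsH : sᴴ = s := hs.1
  have hwH : wᴴ = w := hw.1
  have hstar : ∀ i j, star (w i j) = w j i := by
    intro i j
    conv_rhs => rw [← hwH]
    rw [Matrix.conjTranspose_apply]
  have hkH : ((1 : Matrix (Fin n) (Fin n) ℂ) ⊗ₖ w)ᴴ = (1 : Matrix (Fin n) (Fin n) ℂ) ⊗ₖ w := by
    ext ⟨k, j⟩ ⟨l, i⟩
    simp only [Matrix.conjTranspose_apply, Matrix.kroneckerMap_apply, Matrix.one_apply]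
    by_cases h : l = k
    · subst h; simp [hstar]
    · rw [if_neg h, if_neg (fun hh => h hh.symm)]
      simp
  have hγH : (gammaOp s w)ᴴ = ((1 : Matrix (Fin n) (Fin n) ℂ) ⊗ₖ w) * s := by
    rw [gammaOp, Matrix.conjTranspose_mul, hkH, hsH]
  have hwtw : w * ptrace1 ρ * w = 1 := by
    have h1 : w * (w * ptrace1 ρ) = 1 := by rw [← mul_assoc]; exact hww
    exact (mul_eq_one_comm).mp h1
  rw [Emap, trace_mul_one_kron, ← trace_one_kron_mul, hγH, gammaOp]
  have h3 : ((1 : Matrix (Fin n) (Fin n) ℂ) ⊗ₖ ptrace1 ρ) *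
      ((((1 : Matrix (Fin n) (Fin n) ℂ) ⊗ₖ w) * s) * A * (s * ((1 : Matrix (Fin n) (Fin n) ℂ) ⊗ₖ w)))
      = (((1 : Matrix (Fin n) (Fin n) ℂ) ⊗ₖ ptrace1 ρ) * ((1 : Matrix (Fin n) (Fin n) ℂ) ⊗ₖ w)) *
        (s * A * s) * ((1 : Matrix (Fin n) (Fin n) ℂ) ⊗ₖ w) := by
    noncomm_ring
  have hwtw' : w * (ptrace1 ρ * w) = 1 := by rw [← mul_assoc]; exact hwtw
  rw [h3, ← Matrix.mul_kronecker_mul, Matrix.one_mul, Matrix.trace_mul_comm, ← mul_assoc,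
    ← Matrix.mul_kronecker_mul, Matrix.one_mul, hwtw', Matrix.one_kronecker_one,
    Matrix.one_mul, Matrix.trace_mul_comm, ← mul_assoc, hss]
end

section
/- Key inequality for non-separability: if S = Σ_j A_j⊗B_j with A_j, B_j positive operators on ℂ², and T is a self-adjoint operator on ℂ²⊗ℂ² with T(ξ1⊗ξ2) = 0, T(ξ2⊗ξ1) = 0, and ⟨ξ2⊗ξ2, T ξ1⊗ξ1⟩ = α > 0 real, then ‖T − S‖ ≥ α/2. Consequently T is not in the norm closure of separable positive operators. -/
open Matrix Kronecker
open scoped ComplexOrder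

/-!
For a separable `S = ∑ⱼ Aⱼ ⊗ Bⱼ` with `Aⱼ, Bⱼ ≥ 0`, Cauchy–Schwarz for each positive factor and
AM–GM bound the corner entry by the two "crossed" diagonal entries:
`|⟨ξ₂⊗ξ₂, S ξ₁⊗ξ₁⟩| ≤ (⟨ξ₁⊗ξ₂, S ξ₁⊗ξ₂⟩ + ⟨ξ₂⊗ξ₁, S ξ₂⊗ξ₁⟩) / 2`.
For `T` those diagonal entries vanish and the corner entry is `α`. Since every matrix entry of
`T - S` between unit vectors is at most `ε = ‖T - S‖`, both diagonal entries of `S` are `≤ ε` and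
its corner entry is `≥ α - ε`, so `α ≤ 2ε`. The closure statement follows because
`{S | α / 2 ≤ ‖T - S‖}` is closed.
-/

open scoped MatrixOrder

section CauchySchwarz

variable {𝕜 n m : Type*} [RCLike 𝕜] [Fintype n] [Fintype m]

lemma norm_star_dotProduct_sq_le (u v : n → 𝕜) :
    ‖star u ⬝ᵥ v‖ ^ 2 ≤ RCLike.re (star u ⬝ᵥ u) * RCLike.re (star v ⬝ᵥ v) := by
  have h := inner_mul_inner_self_le (𝕜 := 𝕜) (WithLp.toLp 2 u) (WithLp.toLp 2 v)
  rwa [norm_inner_symm (WithLp.toLp 2 v), ← sq, EuclideanSpace.inner_toLp_toLp,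
    EuclideanSpace.inner_toLp_toLp, EuclideanSpace.inner_toLp_toLp, dotProduct_comm,
    dotProduct_comm u, dotProduct_comm v] at h

lemma Matrix.PosSemidef.norm_star_dotProduct_mulVec_sq_le {M : Matrix n n 𝕜}
    (hM : M.PosSemidef) (x y : n → 𝕜) :
    ‖star x ⬝ᵥ M *ᵥ y‖ ^ 2 ≤
      RCLike.re (star x ⬝ᵥ M *ᵥ x) * RCLike.re (star y ⬝ᵥ M *ᵥ y) := by
  classical
  obtain ⟨B, rfl⟩ := CStarAlgebra.nonneg_iff_eq_star_mul_self.mp hM.nonneg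
  have hfactor (z w : n → 𝕜) : star z ⬝ᵥ (star B * B) *ᵥ w = star (B *ᵥ z) ⬝ᵥ B *ᵥ w := by
    rw [← mulVec_mulVec, dotProduct_mulVec, star_eq_conjTranspose, vecMul_conjTranspose,
      star_star]
  rw [hfactor, hfactor, hfactor]
  exact norm_star_dotProduct_sq_le _ _

lemma norm_mul_star_dotProduct_mulVec_le {A : Matrix n n 𝕜} {B : Matrix m m 𝕜}
    (hA : A.PosSemidef) (hB : B.PosSemidef) (x y : n → 𝕜) (u v : m → 𝕜) :
    ‖(star y ⬝ᵥ A *ᵥ x) * (star v ⬝ᵥ B *ᵥ u)‖ ≤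
      (RCLike.re (star x ⬝ᵥ A *ᵥ x) * RCLike.re (star v ⬝ᵥ B *ᵥ v) +
        RCLike.re (star y ⬝ᵥ A *ᵥ y) * RCLike.re (star u ⬝ᵥ B *ᵥ u)) / 2 := by
  set P := RCLike.re (star x ⬝ᵥ A *ᵥ x) * RCLike.re (star v ⬝ᵥ B *ᵥ v)
  set Q := RCLike.re (star y ⬝ᵥ A *ᵥ y) * RCLike.re (star u ⬝ᵥ B *ᵥ u)
  have hP : 0 ≤ P := mul_nonneg (hA.re_dotProduct_nonneg x) (hB.re_dotProduct_nonneg v)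
  have hQ : 0 ≤ Q := mul_nonneg (hA.re_dotProduct_nonneg y) (hB.re_dotProduct_nonneg u)
  have hcs : ‖(star y ⬝ᵥ A *ᵥ x) * (star v ⬝ᵥ B *ᵥ u)‖ ^ 2 ≤ P * Q := by
    rw [norm_mul, mul_pow]
    calc _ ≤ (RCLike.re (star y ⬝ᵥ A *ᵥ y) * RCLike.re (star x ⬝ᵥ A *ᵥ x)) *
          (RCLike.re (star v ⬝ᵥ B *ᵥ v) * RCLike.re (star u ⬝ᵥ B *ᵥ u)) :=
          mul_le_mul (hA.norm_star_dotProduct_mulVec_sq_le y x)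
            (hB.norm_star_dotProduct_mulVec_sq_le v u) (sq_nonneg _)
            (mul_nonneg (hA.re_dotProduct_nonneg y) (hA.re_dotProduct_nonneg x))
      _ = P * Q := by ring
  rw [← pow_le_pow_iff_left₀ (norm_nonneg _) (by positivity) two_ne_zero]
  nlinarith [sq_nonneg (P - Q)]

end CauchySchwarz

lemma star_vecTens_dotProduct_kronecker_mulVec {n m : ℕ} (A : Matrix (Fin n) (Fin n) ℂ)
    (B : Matrix (Fin m) (Fin m) ℂ) (x z : Fin n → ℂ) (y w : Fin m → ℂ) :
    star (vecTens x y) ⬝ᵥ (A ⊗ₖ B) *ᵥ vecTens z w =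
      (star x ⬝ᵥ A *ᵥ z) * (star y ⬝ᵥ B *ᵥ w) := by
  simp only [vecTens, dotProduct, mulVec, kroneckerMap_apply, Pi.star_apply, star_mul',
    Fintype.sum_prod_type, Finset.sum_mul, Finset.mul_sum]
  rw [Finset.sum_comm]
  refine Finset.sum_congr rfl fun k _ => ?_
  conv_lhs => enter [2, i]; rw [Finset.sum_comm]
  rw [Finset.sum_comm]
  refine Finset.sum_congr rfl fun l _ => Finset.sum_congr rfl fun i _ =>
    Finset.sum_congr rfl fun j _ => ?_
  ring

lemma star_vecTens_dotProduct_vecTens {n m : ℕ} (x z : Fin n → ℂ) (y w : Fin m → ℂ) :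
    star (vecTens x y) ⬝ᵥ vecTens z w = (star x ⬝ᵥ z) * (star y ⬝ᵥ w) := by
  simpa [one_kronecker_one] using
    star_vecTens_dotProduct_kronecker_mulVec (1 : Matrix (Fin n) (Fin n) ℂ) 1 x z y w

section Separable

variable {ι : Type*} [Fintype ι] {n m : ℕ} {A : ι → Matrix (Fin n) (Fin n) ℂ}
  {B : ι → Matrix (Fin m) (Fin m) ℂ}

lemma star_vecTens_dotProduct_sum_kronecker_mulVec (x z : Fin n → ℂ) (y w : Fin m → ℂ) :
    star (vecTens x y) ⬝ᵥ (∑ j, A j ⊗ₖ B j) *ᵥ vecTens z w =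
      ∑ j, (star x ⬝ᵥ A j *ᵥ z) * (star y ⬝ᵥ B j *ᵥ w) := by
  simp only [sum_mulVec, dotProduct_sum, star_vecTens_dotProduct_kronecker_mulVec]

theorem norm_star_vecTens_dotProduct_sum_kronecker_mulVec_le (hA : ∀ j, (A j).PosSemidef)
    (hB : ∀ j, (B j).PosSemidef) (x y : Fin n → ℂ) (u v : Fin m → ℂ) :
    ‖star (vecTens y v) ⬝ᵥ (∑ j, A j ⊗ₖ B j) *ᵥ vecTens x u‖ ≤
      (RCLike.re (star (vecTens x v) ⬝ᵥ (∑ j, A j ⊗ₖ B j) *ᵥ vecTens x v) +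
        RCLike.re (star (vecTens y u) ⬝ᵥ (∑ j, A j ⊗ₖ B j) *ᵥ vecTens y u)) / 2 := by
  simp only [star_vecTens_dotProduct_sum_kronecker_mulVec, map_sum, ← Finset.sum_add_distrib,
    Finset.sum_div]
  refine (norm_sum_le _ _).trans (Finset.sum_le_sum fun j _ => ?_)
  have hre (a : Fin n → ℂ) (b : Fin m → ℂ) :
      RCLike.re ((star a ⬝ᵥ A j *ᵥ a) * (star b ⬝ᵥ B j *ᵥ b)) =
        RCLike.re (star a ⬝ᵥ A j *ᵥ a) * RCLike.re (star b ⬝ᵥ B j *ᵥ b) := by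
    rw [RCLike.mul_re, (hA j).isHermitian.im_star_dotProduct_mulVec_self,
      (hB j).isHermitian.im_star_dotProduct_mulVec_self, mul_zero, sub_zero]
  rw [hre, hre]
  exact norm_mul_star_dotProduct_mulVec_le (hA j) (hB j) x y u v

end Separable

section OperatorNorm

variable {𝕜 n : Type*} [RCLike 𝕜] [Fintype n] [DecidableEq n]

lemma norm_star_dotProduct_mulVec_le_opNorm (M : Matrix n n 𝕜) {u v : n → 𝕜}
    (hu : star u ⬝ᵥ u = 1) (hv : star v ⬝ᵥ v = 1) :
    ‖star u ⬝ᵥ M *ᵥ v‖ ≤ ‖toEuclideanCLM (𝕜 := 𝕜) M‖ := by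
  have hnorm {w : n → 𝕜} (hw : star w ⬝ᵥ w = 1) : ‖WithLp.toLp 2 w‖ = 1 := by
    have := inner_self_eq_norm_sq (𝕜 := 𝕜) (WithLp.toLp 2 w)
    rw [EuclideanSpace.inner_toLp_toLp, dotProduct_comm, hw, RCLike.one_re] at this
    nlinarith [norm_nonneg (WithLp.toLp 2 w)]
  calc ‖star u ⬝ᵥ M *ᵥ v‖
        = ‖inner 𝕜 (WithLp.toLp 2 u) (toEuclideanCLM (𝕜 := 𝕜) M (WithLp.toLp 2 v))‖ := by
        rw [toEuclideanCLM_toLp, EuclideanSpace.inner_toLp_toLp, dotProduct_comm]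
    _ ≤ ‖WithLp.toLp 2 u‖ * (‖toEuclideanCLM (𝕜 := 𝕜) M‖ * ‖WithLp.toLp 2 v‖) :=
        (norm_inner_le_norm _ _).trans
          (mul_le_mul_of_nonneg_left ((toEuclideanCLM (𝕜 := 𝕜) M).le_opNorm _) (norm_nonneg _))
    _ = ‖toEuclideanCLM (𝕜 := 𝕜) M‖ := by rw [hnorm hu, hnorm hv, one_mul, mul_one]

lemma continuous_toEuclideanCLM : Continuous (toEuclideanCLM (n := n) (𝕜 := 𝕜)) :=
  LinearMap.continuous_of_finiteDimensional
    (toEuclideanCLM (n := n) (𝕜 := 𝕜)).toAlgEquiv.toLinearMap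

end OperatorNorm

theorem key_nonseparability_inequality_general (ξ : Fin 2 → Fin 2 → ℂ)
    (hξ : ∀ i j, (∑ k, star (ξ i k) * ξ j k) = if i = j then 1 else 0)
    (T : Matrix (Fin 2 × Fin 2) (Fin 2 × Fin 2) ℂ)
    (h12 : T.mulVec (vecTens (ξ 0) (ξ 1)) = 0)
    (h21 : T.mulVec (vecTens (ξ 1) (ξ 0)) = 0)
    (α : ℝ) (hα : 0 < α)
    (hmat : star (vecTens (ξ 1) (ξ 1)) ⬝ᵥ T.mulVec (vecTens (ξ 0) (ξ 0)) = (α : ℂ)) :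
    (∀ (N : ℕ) (A B : Fin N → Matrix (Fin 2) (Fin 2) ℂ),
        (∀ j, (A j).PosSemidef) → (∀ j, (B j).PosSemidef) →
        α / 2 ≤ ‖Matrix.toEuclideanCLM (𝕜 := ℂ) (T - ∑ j, A j ⊗ₖ B j)‖) ∧
      T ∉ closure {S : Matrix (Fin 2 × Fin 2) (Fin 2 × Fin 2) ℂ |
        ∃ (N : ℕ) (A B : Fin N → Matrix (Fin 2) (Fin 2) ℂ),
          (∀ j, (A j).PosSemidef) ∧ (∀ j, (B j).PosSemidef) ∧ S = ∑ j, A j ⊗ₖ B j} := by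
  have hunit (i k : Fin 2) : star (vecTens (ξ i) (ξ k)) ⬝ᵥ vecTens (ξ i) (ξ k) = 1 := by
    have horth : ∀ i j, star (ξ i) ⬝ᵥ ξ j = if i = j then 1 else 0 := hξ
    rw [star_vecTens_dotProduct_vecTens, horth, horth, if_pos rfl, if_pos rfl, one_mul]
  have hdist (N : ℕ) (A B : Fin N → Matrix (Fin 2) (Fin 2) ℂ) (hA : ∀ j, (A j).PosSemidef)
      (hB : ∀ j, (B j).PosSemidef) :
      α / 2 ≤ ‖toEuclideanCLM (𝕜 := ℂ) (T - ∑ j, A j ⊗ₖ B j)‖ := by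
    set S := ∑ j, A j ⊗ₖ B j
    have hentry (i k i' k' : Fin 2) :=
      norm_star_dotProduct_mulVec_le_opNorm (T - S) (hunit i k) (hunit i' k')
    have hdiag {i k : Fin 2} (hker : T *ᵥ vecTens (ξ i) (ξ k) = 0) :
        RCLike.re (star (vecTens (ξ i) (ξ k)) ⬝ᵥ S *ᵥ vecTens (ξ i) (ξ k)) ≤
          ‖toEuclideanCLM (𝕜 := ℂ) (T - S)‖ := by
      refine (RCLike.re_le_norm _).trans (le_of_eq_of_le ?_ (hentry i k i k))
      rw [sub_mulVec, hker, zero_sub, dotProduct_neg, norm_neg]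
    have hcorner : α ≤ ‖toEuclideanCLM (𝕜 := ℂ) (T - S)‖ +
        ‖star (vecTens (ξ 1) (ξ 1)) ⬝ᵥ S *ᵥ vecTens (ξ 0) (ξ 0)‖ := by
      refine le_of_eq_of_le ?_
        ((norm_add_le _ _).trans (add_le_add (hentry 1 1 0 0) le_rfl))
      rw [sub_mulVec, dotProduct_sub, hmat, sub_add_cancel, Complex.norm_real,
        Real.norm_of_nonneg hα.le]
    have hsep := norm_star_vecTens_dotProduct_sum_kronecker_mulVec_le hA hB (ξ 0) (ξ 1) (ξ 0) (ξ 1)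
    linarith [hdiag h12, hdiag h21]
  refine ⟨hdist, fun hT => ?_⟩
  have hclosed : IsClosed {S : Matrix (Fin 2 × Fin 2) (Fin 2 × Fin 2) ℂ |
      α / 2 ≤ ‖toEuclideanCLM (𝕜 := ℂ) (T - S)‖} :=
    isClosed_le continuous_const
      (continuous_toEuclideanCLM.comp (continuous_const.sub continuous_id)).norm
  have hT_far := closure_minimal
    (by rintro _ ⟨N, A, B, hA, hB, rfl⟩; exact hdist N A B hA hB) hclosed hT
  simp only [Set.mem_ofPred_eq, sub_self, map_zero, norm_zero] at hT_far
  linarith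

/-- key inequality for non-separability. If `T` is self-adjoint,
kills `ξ1⊗ξ2` and `ξ2⊗ξ1`, and has `⟨ξ2⊗ξ2, T ξ1⊗ξ1⟩ = α > 0`, then `T` is at
operator-norm distance at least `α/2` from every finite sum `Σ Aⱼ⊗Bⱼ` of products of
positive operators; consequently `T` is not in the closure of such sums. -/
theorem key_nonseparability_inequality (ξ : Fin 2 → Fin 2 → ℂ)
    (hξ : ∀ i j, (∑ k, star (ξ i k) * ξ j k) = if i = j then 1 else 0)
    (T : Matrix (Fin 2 × Fin 2) (Fin 2 × Fin 2) ℂ) (hT : T.IsHermitian)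
    (h12 : T.mulVec (vecTens (ξ 0) (ξ 1)) = 0)
    (h21 : T.mulVec (vecTens (ξ 1) (ξ 0)) = 0)
    (α : ℝ) (hα : 0 < α)
    (hmat : star (vecTens (ξ 1) (ξ 1)) ⬝ᵥ T.mulVec (vecTens (ξ 0) (ξ 0)) = (α : ℂ)) :
    (∀ (N : ℕ) (A B : Fin N → Matrix (Fin 2) (Fin 2) ℂ),
        (∀ j, (A j).PosSemidef) → (∀ j, (B j).PosSemidef) →
        α / 2 ≤ ‖Matrix.toEuclideanCLM (𝕜 := ℂ) (T - ∑ j, A j ⊗ₖ B j)‖) ∧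
      T ∉ closure {S : Matrix (Fin 2 × Fin 2) (Fin 2 × Fin 2) ℂ |
        ∃ (N : ℕ) (A B : Fin N → Matrix (Fin 2) (Fin 2) ℂ),
          (∀ j, (A j).PosSemidef) ∧ (∀ j, (B j).PosSemidef) ∧ S = ∑ j, A j ⊗ₖ B j} :=
  key_nonseparability_inequality_general ξ hξ T h12 h21 α hα hmat
end

section
/- Factorization criterion: let ρ = Σ_i λ_i ρ_i^I⊗ρ_i^{II} be a separable invertible density matrix on H1⊗H2 (dim H1 = n, dim H2 = m), {φ_k} any orthonormal basis of H1, {ϕ_j} an orthonormal basis of H2 diagonalizing Tr_1ρ. Then Tr(ρ E(F⊗1)·(1⊗G)) = Σ_i λ_i Tr(ρ_i^I F)·Tr(ρ_i^{II} G) for all F ∈ B(H1), G ∈ B(H2) if and only if for all k,l ∈ {1,…,n}, j,i ∈ {1,…,m}: ρ_{lkji} = Σ_{p,q} (ρ^{1/2})_{pkjq}(ρ^{1/2})_{lpqi} √(Σ_r ρ_{rrjj} / Σ_v ρ_{vvii}). -/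
open Matrix Kronecker
open scoped ComplexOrder

/-- Matrix element `⟨φ_p⊗ϕ_r | M | φ_q⊗ϕ_s⟩` in a product basis. -/
noncomputable def mel {n m : ℕ} (φ : Fin n → Fin n → ℂ) (ϕ : Fin m → Fin m → ℂ)
    (M : Matrix (Fin n × Fin m) (Fin n × Fin m) ℂ) (p q : Fin n) (r s : Fin m) : ℂ :=
  star (vecTens (φ p) (ϕ r)) ⬝ᵥ M.mulVec (vecTens (φ q) (ϕ s))

/-!
Both sides of the factorization identity are bilinear in `(F, G)`, and by separability the
right-hand side is `Tr(ρ (F ⊗ G))`. Since the rank-one operators `|φ_k⟩⟨φ_l|` and `|ϕ_i⟩⟨ϕ_j|`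
span the two matrix algebras, the identity holds for all `F, G` iff it holds on these, where
`Tr(ρ (F ⊗ G))` is the matrix element `ρ_{lkji}`. On the other side,
`Tr(ρ E(F ⊗ 1)(1 ⊗ G)) = Tr(Tr₁ρ · Tr₁(γ* (F ⊗ 1) γ) · G)`; the vector `ϕ_j` is an eigenvector of
`Tr₁ρ` with eigenvalue `a_j` and hence of `w = (Tr₁ρ)^{-1/2}` with eigenvalue `a_j^{-1/2}`, so this
trace collapses to `√(a_j / a_i) Σ_{p,q} (ρ^{1/2})_{pkjq} (ρ^{1/2})_{lpqi}`.
-/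

section Ketbra

variable {d : Type*} [Fintype d]

lemma ketbra_mulVec (y z v : d → ℂ) : ketbra y z *ᵥ v = (star z ⬝ᵥ v) • y := by
  ext a
  simp only [ketbra, mulVec, dotProduct, Pi.smul_apply, smul_eq_mul, Pi.star_apply,
    Finset.sum_mul]
  exact Finset.sum_congr rfl fun b _ => by ring

lemma dotProduct_ketbra_mulVec (u y z v : d → ℂ) :
    star u ⬝ᵥ ketbra y z *ᵥ v = (star u ⬝ᵥ y) * (star z ⬝ᵥ v) := by
  rw [ketbra_mulVec, dotProduct_smul, smul_eq_mul, mul_comm]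

lemma trace_mul_ketbra (A : Matrix d d ℂ) (y z : d → ℂ) :
    (A * ketbra y z).trace = star z ⬝ᵥ A *ᵥ y := by
  simp only [trace, diag, mul_apply, ketbra, dotProduct, mulVec, Pi.star_apply,
    Finset.mul_sum]
  exact Finset.sum_congr rfl fun a _ => Finset.sum_congr rfl fun b _ => by ring

lemma ketbra_mul_mul_ketbra (y z u v : d → ℂ) (A : Matrix d d ℂ) :
    ketbra y z * A * ketbra u v = (star z ⬝ᵥ A *ᵥ u) • ketbra y v := by
  ext a b
  simp only [mul_apply, ketbra, Matrix.smul_apply, smul_eq_mul, dotProduct, mulVec,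
    Pi.star_apply, Finset.sum_mul, Finset.mul_sum]
  rw [Finset.sum_comm]
  exact Finset.sum_congr rfl fun c _ => Finset.sum_congr rfl fun e _ => by ring

variable [DecidableEq d] {φ : d → d → ℂ}

lemma sum_ketbra_self_eq_one (hφ : ∀ i j, ∑ k, star (φ i k) * φ j k = if i = j then 1 else 0) :
    ∑ k, ketbra (φ k) (φ k) = 1 := by
  -- `hφ` says that the matrix with columns `φ k` is unitary: `Uᴴ U = 1`, hence `U Uᴴ = 1`.
  have hU : (of φ)ᵀᴴ * (of φ)ᵀ = 1 := by
    ext i j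
    simpa [mul_apply, one_apply] using hφ i j
  ext a b
  simpa [mul_apply, Matrix.sum_apply, ketbra] using congrArg (· a b) (mul_eq_one_comm.mp hU)

lemma eq_sum_ketbra (hφ : ∀ i j, ∑ k, star (φ i k) * φ j k = if i = j then 1 else 0)
    (F : Matrix d d ℂ) :
    F = ∑ k, ∑ l, (star (φ k) ⬝ᵥ F *ᵥ φ l) • ketbra (φ k) (φ l) := by
  conv_lhs => rw [← one_mul F, ← mul_one (1 * F), ← sum_ketbra_self_eq_one hφ]
  simp only [Finset.sum_mul, Finset.mul_sum, ketbra_mul_mul_ketbra]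
  exact Finset.sum_comm

end Ketbra

theorem LinearMap.ext_ketbra_iff {d e P : Type*} [Fintype d] [DecidableEq d] [Fintype e]
    [DecidableEq e] [AddCommMonoid P] [Module ℂ P] {φ : d → d → ℂ} {ϕ : e → e → ℂ}
    (hφ : ∀ i j, ∑ k, star (φ i k) * φ j k = if i = j then 1 else 0)
    (hϕ : ∀ i j, ∑ k, star (ϕ i k) * ϕ j k = if i = j then 1 else 0)
    {f g : Matrix d d ℂ →ₗ[ℂ] Matrix e e ℂ →ₗ[ℂ] P} :
    f = g ↔ ∀ k l j i, f (ketbra (φ k) (φ l)) (ketbra (ϕ i) (ϕ j)) =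
      g (ketbra (φ k) (φ l)) (ketbra (ϕ i) (ϕ j)) := by
  refine ⟨fun h _ _ _ _ => h ▸ rfl, fun h => LinearMap.ext₂ fun F G => ?_⟩
  rw [eq_sum_ketbra hφ F, eq_sum_ketbra hϕ G]
  simp only [map_sum, map_smul, LinearMap.sum_apply, LinearMap.smul_apply, h]

section Spectral

variable {d : Type*} [Fintype d]

lemma Matrix.IsHermitian.star_mulVec_dotProduct {A : Matrix d d ℂ} (hA : A.IsHermitian)
    (u x : d → ℂ) : star (A *ᵥ u) ⬝ᵥ x = star u ⬝ᵥ A *ᵥ x := by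
  rw [star_mulVec, hA.eq, ← dotProduct_mulVec]

lemma Matrix.IsHermitian.star_dotProduct_mul_mulVec {P : Matrix d d ℂ} (hP : P.IsHermitian)
    {v : d → ℂ} {a : ℝ} (hv : P *ᵥ v = (a : ℂ) • v) (B : Matrix d d ℂ) (x : d → ℂ) :
    star v ⬝ᵥ (P * B) *ᵥ x = a * (star v ⬝ᵥ B *ᵥ x) := by
  have hvP : star v ᵥ* P = (a : ℂ) • star v := by
    rw [← hP.eq, vecMul_conjTranspose, star_star, hv, star_smul, Complex.star_def,
      Complex.conj_ofReal]
  rw [← mulVec_mulVec, dotProduct_mulVec, hvP, smul_dotProduct, smul_eq_mul]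

lemma star_dotProduct_conjTranspose_mul_mul_mulVec (A K : Matrix d d ℂ) (u v : d → ℂ) :
    star u ⬝ᵥ (Aᴴ * K * A) *ᵥ v = star (A *ᵥ u) ⬝ᵥ K *ᵥ (A *ᵥ v) := by
  rw [← mulVec_mulVec, ← mulVec_mulVec, dotProduct_mulVec, vecMul_conjTranspose, star_star]

variable [DecidableEq d]

lemma Matrix.PosSemidef.mulVec_eq_of_mul_self_mulVec {w : Matrix d d ℂ} (hw : w.PosSemidef)
    {c : ℝ} (hc : 0 < c) {v : d → ℂ} (hv : (w * w) *ᵥ v = ((c ^ 2 : ℝ) : ℂ) • v) :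
    w *ᵥ v = (c : ℂ) • v := by
  -- `w + c` is positive definite, hence injective, and it kills `w v - c v`.
  have hpos : (w + (c : ℂ) • 1).PosDef :=
    PosDef.posSemidef_add hw (PosDef.one.smul (by exact_mod_cast hc))
  have hzero : (w + (c : ℂ) • 1) *ᵥ (w *ᵥ v - (c : ℂ) • v) = 0 := by
    rw [add_mulVec, mulVec_sub, mulVec_sub, mulVec_mulVec, hv, smul_mulVec, one_mulVec,
      mulVec_smul, smul_mulVec, one_mulVec]
    push_cast
    module
  exact sub_eq_zero.mp <| mulVec_injective_iff_isUnit.mpr hpos.isUnit <|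
    hzero.trans (mulVec_zero _).symm

lemma Matrix.PosSemidef.mulVec_eq_inv_sqrt_smul {w P : Matrix d d ℂ} (hw : w.PosSemidef)
    (hwP : w * w * P = 1) {a : ℝ} (ha : 0 < a) {v : d → ℂ} (hv : P *ᵥ v = (a : ℂ) • v) :
    w *ᵥ v = (((√a)⁻¹ : ℝ) : ℂ) • v := by
  refine hw.mulVec_eq_of_mul_self_mulVec (by positivity) ?_
  have h := congrArg (· *ᵥ v) hwP
  simp only [← mulVec_mulVec, hv, one_mulVec, mulVec_smul] at h
  rw [inv_pow, Real.sq_sqrt ha.le, ← mulVec_mulVec]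
  conv_rhs => rw [← h]
  rw [smul_smul, Complex.ofReal_inv, inv_mul_cancel₀ (by exact_mod_cast ha.ne'), one_smul]

end Spectral

lemma Real.mul_inv_sqrt_mul_inv_sqrt {a : ℝ} (ha : 0 < a) (b : ℝ) :
    a * (√a)⁻¹ * (√b)⁻¹ = √(a / b) := by
  have := (Real.sqrt_pos.mpr ha).ne'
  rw [Real.sqrt_div ha.le]
  field_simp
  rw [Real.sq_sqrt ha.le]

section Kronecker

variable {l m : Type*}

lemma Matrix.kronecker_sum {ι : Type*} (A : Matrix l l ℂ) (s : Finset ι) (B : ι → Matrix m m ℂ) :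
    A ⊗ₖ (∑ i ∈ s, B i) = ∑ i ∈ s, A ⊗ₖ B i := by
  ext p q
  simp [Matrix.sum_apply, Finset.mul_sum]

lemma Matrix.sum_kronecker {ι : Type*} (s : Finset ι) (A : ι → Matrix l l ℂ) (B : Matrix m m ℂ) :
    (∑ i ∈ s, A i) ⊗ₖ B = ∑ i ∈ s, A i ⊗ₖ B := by
  ext p q
  simp [Matrix.sum_apply, Finset.sum_mul]

lemma Matrix.trace_sum_smul_kronecker_mul_kronecker [Fintype l] [Fintype m] {ι : Type*}
    [Fintype ι] (c : ι → ℂ) (A : ι → Matrix l l ℂ) (B : ι → Matrix m m ℂ)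
    (F : Matrix l l ℂ) (G : Matrix m m ℂ) :
    ((∑ i, c i • (A i ⊗ₖ B i)) * (F ⊗ₖ G)).trace =
      ∑ i, c i * (A i * F).trace * (B i * G).trace := by
  simp only [Matrix.sum_mul, Matrix.smul_mul, trace_sum, trace_smul, ← mul_kronecker_mul,
    trace_kronecker, smul_eq_mul, mul_assoc]

end Kronecker

section PartialTrace

variable {n m : ℕ}

lemma ketbra_kronecker_ketbra (x y : Fin n → ℂ) (u v : Fin m → ℂ) :
    ketbra x y ⊗ₖ ketbra u v = ketbra (vecTens x u) (vecTens y v) := by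
  ext ⟨a, b⟩ ⟨c, e⟩
  simp only [kronecker_apply, ketbra, vecTens, star_mul']
  ring

lemma kronecker_mulVec_vecTens (A : Matrix (Fin n) (Fin n) ℂ) (B : Matrix (Fin m) (Fin m) ℂ)
    (x : Fin n → ℂ) (y : Fin m → ℂ) :
    (A ⊗ₖ B) *ᵥ vecTens x y = vecTens (A *ᵥ x) (B *ᵥ y) := by
  ext ⟨a, b⟩
  simp only [mulVec, dotProduct, vecTens, Fintype.sum_prod_type, kronecker_apply,
    Finset.sum_mul_sum]
  exact Finset.sum_congr rfl fun c _ => Finset.sum_congr rfl fun e _ => by ring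

lemma vecTens_smul_right (x : Fin n → ℂ) (c : ℂ) (y : Fin m → ℂ) :
    vecTens x (c • y) = c • vecTens x y := by
  ext p
  simp only [vecTens, Pi.smul_apply, smul_eq_mul]
  ring

lemma ptrace1_add (X Y : Matrix (Fin n × Fin m) (Fin n × Fin m) ℂ) :
    ptrace1 (X + Y) = ptrace1 X + ptrace1 Y := by
  ext j i
  simp [ptrace1, Finset.sum_add_distrib]

lemma ptrace1_smul (c : ℂ) (X : Matrix (Fin n × Fin m) (Fin n × Fin m) ℂ) :
    ptrace1 (c • X) = c • ptrace1 X := by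
  ext j i
  simp [ptrace1, Finset.mul_sum]

lemma ptrace1_isHermitian {X : Matrix (Fin n × Fin m) (Fin n × Fin m) ℂ} (hX : X.IsHermitian) :
    (ptrace1 X).IsHermitian := by
  ext j i
  simp only [conjTranspose_apply, ptrace1, star_sum]
  exact Finset.sum_congr rfl fun k _ => congr_fun₂ hX (k, j) (k, i)

lemma trace_mul_one_kronecker (X : Matrix (Fin n × Fin m) (Fin n × Fin m) ℂ)
    (M : Matrix (Fin m) (Fin m) ℂ) :
    (X * ((1 : Matrix (Fin n) (Fin n) ℂ) ⊗ₖ M)).trace = (ptrace1 X * M).trace := by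
  simp only [trace, diag_apply, mul_apply, kroneckerMap_apply, one_apply, ite_mul, one_mul,
    zero_mul, mul_ite, mul_zero, Fintype.sum_prod_type, Finset.sum_ite_irrel,
    Finset.sum_const_zero, Finset.sum_ite_eq', Finset.mem_univ, ↓reduceIte, ptrace1,
    Finset.sum_mul]
  rw [Finset.sum_comm]
  exact Finset.sum_congr rfl fun _ _ => Finset.sum_comm

lemma dotProduct_ptrace1_mulVec {φ : Fin n → Fin n → ℂ}
    (hφ : ∀ i j, ∑ k, star (φ i k) * φ j k = if i = j then 1 else 0)
    (X : Matrix (Fin n × Fin m) (Fin n × Fin m) ℂ) (x y : Fin m → ℂ) :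
    star y ⬝ᵥ ptrace1 X *ᵥ x = ∑ r, star (vecTens (φ r) y) ⬝ᵥ X *ᵥ vecTens (φ r) x := by
  rw [← trace_mul_ketbra, ← trace_mul_one_kronecker, ← sum_ketbra_self_eq_one hφ,
    Matrix.sum_kronecker, Matrix.mul_sum, Matrix.trace_sum]
  simp only [ketbra_kronecker_ketbra, trace_mul_ketbra]

lemma ketbra_kronecker_one {ϕ : Fin m → Fin m → ℂ}
    (hϕ : ∀ i j, ∑ k, star (ϕ i k) * ϕ j k = if i = j then 1 else 0) (x y : Fin n → ℂ) :
    ketbra x y ⊗ₖ (1 : Matrix (Fin m) (Fin m) ℂ) =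
      ∑ q, ketbra (vecTens x (ϕ q)) (vecTens y (ϕ q)) := by
  rw [← sum_ketbra_self_eq_one hϕ, Matrix.kronecker_sum]
  simp only [ketbra_kronecker_ketbra]

end PartialTrace

section Correlation

variable {n m : ℕ}

lemma gammaOp_mulVec_vecTens (s : Matrix (Fin n × Fin m) (Fin n × Fin m) ℂ)
    {w : Matrix (Fin m) (Fin m) ℂ} {y : Fin m → ℂ} {c : ℂ} (hy : w *ᵥ y = c • y)
    (x : Fin n → ℂ) :
    gammaOp s w *ᵥ vecTens x y = c • s *ᵥ vecTens x y := by
  rw [gammaOp, ← mulVec_mulVec, kronecker_mulVec_vecTens, one_mulVec, hy, vecTens_smul_right,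
    mulVec_smul]

lemma trace_mul_Emap_mul_one_kronecker (ρ s A : Matrix (Fin n × Fin m) (Fin n × Fin m) ℂ)
    (w G : Matrix (Fin m) (Fin m) ℂ) :
    (ρ * Emap s w A * ((1 : Matrix (Fin n) (Fin n) ℂ) ⊗ₖ G)).trace =
      (ptrace1 ρ * ptrace1 ((gammaOp s w)ᴴ * A * gammaOp s w) * G).trace := by
  rw [Emap, mul_assoc ρ, ← mul_kronecker_mul, one_mul, trace_mul_one_kronecker,
    mul_assoc (ptrace1 ρ)]

noncomputable def emapCorrelation (ρ s : Matrix (Fin n × Fin m) (Fin n × Fin m) ℂ)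
    (w : Matrix (Fin m) (Fin m) ℂ) :
    Matrix (Fin n) (Fin n) ℂ →ₗ[ℂ] Matrix (Fin m) (Fin m) ℂ →ₗ[ℂ] ℂ :=
  LinearMap.mk₂ ℂ
    (fun F G => (ρ * Emap s w (F ⊗ₖ (1 : Matrix (Fin m) (Fin m) ℂ)) *
      ((1 : Matrix (Fin n) (Fin n) ℂ) ⊗ₖ G)).trace)
    (fun F₁ F₂ G => by
      simp only [trace_mul_Emap_mul_one_kronecker, add_kronecker, Matrix.mul_add, Matrix.add_mul,
        ptrace1_add, trace_add])
    (fun c F G => by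
      simp only [trace_mul_Emap_mul_one_kronecker, smul_kronecker, Matrix.mul_smul,
        Matrix.smul_mul, ptrace1_smul, trace_smul])
    (fun F G₁ G₂ => by
      simp only [trace_mul_Emap_mul_one_kronecker, Matrix.mul_add, trace_add])
    (fun c F G => by
      simp only [trace_mul_Emap_mul_one_kronecker, Matrix.mul_smul, trace_smul])

noncomputable def productCorrelation (ρ : Matrix (Fin n × Fin m) (Fin n × Fin m) ℂ) :
    Matrix (Fin n) (Fin n) ℂ →ₗ[ℂ] Matrix (Fin m) (Fin m) ℂ →ₗ[ℂ] ℂ :=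
  LinearMap.mk₂ ℂ (fun F G => (ρ * (F ⊗ₖ G)).trace)
    (fun F₁ F₂ G => by simp only [add_kronecker, Matrix.mul_add, trace_add])
    (fun c F G => by simp only [smul_kronecker, Matrix.mul_smul, trace_smul])
    (fun F G₁ G₂ => by simp only [kronecker_add, Matrix.mul_add, trace_add])
    (fun c F G => by simp only [kronecker_smul, Matrix.mul_smul, trace_smul])

lemma productCorrelation_ketbra (ρ : Matrix (Fin n × Fin m) (Fin n × Fin m) ℂ)
    (φ : Fin n → Fin n → ℂ) (ϕ : Fin m → Fin m → ℂ) (k l : Fin n) (j i : Fin m) :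
    productCorrelation ρ (ketbra (φ k) (φ l)) (ketbra (ϕ i) (ϕ j)) = mel φ ϕ ρ l k j i := by
  rw [productCorrelation, LinearMap.mk₂_apply, ketbra_kronecker_ketbra, trace_mul_ketbra]
  rfl

lemma emapCorrelation_ketbra {ρ s : Matrix (Fin n × Fin m) (Fin n × Fin m) ℂ}
    {w : Matrix (Fin m) (Fin m) ℂ} {φ : Fin n → Fin n → ℂ} {ϕ : Fin m → Fin m → ℂ}
    (hφ : ∀ i j, ∑ k, star (φ i k) * φ j k = if i = j then 1 else 0)
    (hϕ : ∀ i j, ∑ k, star (ϕ i k) * ϕ j k = if i = j then 1 else 0)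
    (hs : s.IsHermitian) (hρ : ρ.IsHermitian) (hw : w.PosSemidef) (hww : w * w * ptrace1 ρ = 1)
    {am : Fin m → ℝ} (hapos : ∀ j, 0 < am j)
    (heig : ∀ j, ptrace1 ρ *ᵥ ϕ j = (am j : ℂ) • ϕ j) (k l : Fin n) (j i : Fin m) :
    emapCorrelation ρ s w (ketbra (φ k) (φ l)) (ketbra (ϕ i) (ϕ j)) =
      ∑ p, ∑ q, mel φ ϕ s p k j q * mel φ ϕ s l p q i * (√(am j / am i) : ℂ) := by
  have hwϕ j := hw.mulVec_eq_inv_sqrt_smul hww (hapos j) (heig j)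
  rw [emapCorrelation, LinearMap.mk₂_apply, trace_mul_Emap_mul_one_kronecker, trace_mul_ketbra,
    (ptrace1_isHermitian hρ).star_dotProduct_mul_mulVec (heig j), dotProduct_ptrace1_mulVec hφ]
  simp only [star_dotProduct_conjTranspose_mul_mul_mulVec, gammaOp_mulVec_vecTens s (hwϕ _),
    ketbra_kronecker_one hϕ, sum_mulVec, dotProduct_sum, dotProduct_ketbra_mulVec, star_smul,
    smul_dotProduct, dotProduct_smul]
  simp only [hs.star_mulVec_dotProduct, smul_eq_mul, Complex.star_def, Complex.conj_ofReal,
    Finset.mul_sum]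
  refine Finset.sum_congr rfl fun p _ => Finset.sum_congr rfl fun q _ => ?_
  rw [← Real.mul_inv_sqrt_mul_inv_sqrt (hapos j), mel, mel]
  push_cast
  ring

end Correlation

theorem factorization_criterion_general {n m N : ℕ}
    (ρ s : Matrix (Fin n × Fin m) (Fin n × Fin m) ℂ) (w : Matrix (Fin m) (Fin m) ℂ)
    (lam : Fin N → ℝ)
    (ρI : Fin N → Matrix (Fin n) (Fin n) ℂ)
    (ρII : Fin N → Matrix (Fin m) (Fin m) ℂ)
    (hdec : ρ = ∑ i, ((lam i : ℝ) : ℂ) • (ρI i ⊗ₖ ρII i))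
    (hρ : ρ.PosDef)
    (hs : s.PosSemidef)
    (hw : w.PosSemidef) (hww : w * w * ptrace1 ρ = 1)
    (φ : Fin n → Fin n → ℂ)
    (hφ : ∀ i j, (∑ k, star (φ i k) * φ j k) = if i = j then 1 else 0)
    (ϕ : Fin m → Fin m → ℂ)
    (hϕ : ∀ i j, (∑ k, star (ϕ i k) * ϕ j k) = if i = j then 1 else 0)
    (am : Fin m → ℝ) (hapos : ∀ j, 0 < am j)
    (heig : ∀ j, (ptrace1 ρ).mulVec (ϕ j) = ((am j : ℝ) : ℂ) • ϕ j) :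
    ((∀ (F : Matrix (Fin n) (Fin n) ℂ) (G : Matrix (Fin m) (Fin m) ℂ),
        (ρ * Emap s w (F ⊗ₖ (1 : Matrix (Fin m) (Fin m) ℂ)) *
            ((1 : Matrix (Fin n) (Fin n) ℂ) ⊗ₖ G)).trace =
          ∑ i, ((lam i : ℝ) : ℂ) * (ρI i * F).trace * (ρII i * G).trace) ↔
      (∀ (k l : Fin n) (j i : Fin m),
        mel φ ϕ ρ l k j i =
          ∑ p : Fin n, ∑ q : Fin m,
            mel φ ϕ s p k j q * mel φ ϕ s l p q i *
              ((Real.sqrt (am j / am i) : ℝ) : ℂ))) := by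
  have hseparable (F G) : ∑ i, ((lam i : ℝ) : ℂ) * (ρI i * F).trace * (ρII i * G).trace =
      productCorrelation ρ F G := by
    rw [productCorrelation, LinearMap.mk₂_apply, hdec, trace_sum_smul_kronecker_mul_kronecker]
  simp only [hseparable]
  change (∀ F G, emapCorrelation ρ s w F G = productCorrelation ρ F G) ↔ _
  rw [← LinearMap.ext_iff₂, LinearMap.ext_ketbra_iff hφ hϕ]
  simp only [emapCorrelation_ketbra hφ hϕ hs.isHermitian hρ.isHermitian hw hww hapos heig,
    productCorrelation_ketbra]
  exact forall₄_congr fun _ _ _ _ => eq_comm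

/-- factorization criterion. For a separable invertible density matrix
`ρ = Σ λᵢ ρᵢᴵ⊗ρᵢᴵᴵ`, the correlation function factorizes for all `F, G` iff the matrix
elements of `ρ` and `ρ^{1/2}` satisfy the relation (ii) of Proposition 2. -/
theorem factorization_criterion {n m N : ℕ}
    (ρ s : Matrix (Fin n × Fin m) (Fin n × Fin m) ℂ) (w : Matrix (Fin m) (Fin m) ℂ)
    (lam : Fin N → ℝ) (hlpos : ∀ i, 0 < lam i) (hlsum : ∑ i, lam i = 1)
    (ρI : Fin N → Matrix (Fin n) (Fin n) ℂ)
    (hρI : ∀ i, (ρI i).PosSemidef ∧ (ρI i).trace = 1)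
    (ρII : Fin N → Matrix (Fin m) (Fin m) ℂ)
    (hρII : ∀ i, (ρII i).PosSemidef ∧ (ρII i).trace = 1)
    (hdec : ρ = ∑ i, ((lam i : ℝ) : ℂ) • (ρI i ⊗ₖ ρII i))
    (hρ : ρ.PosDef) (htr : ρ.trace = 1)
    (hs : s.PosSemidef) (hss : s * s = ρ)
    (hw : w.PosSemidef) (hww : w * w * ptrace1 ρ = 1)
    (φ : Fin n → Fin n → ℂ)
    (hφ : ∀ i j, (∑ k, star (φ i k) * φ j k) = if i = j then 1 else 0)
    (ϕ : Fin m → Fin m → ℂ)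
    (hϕ : ∀ i j, (∑ k, star (ϕ i k) * ϕ j k) = if i = j then 1 else 0)
    (am : Fin m → ℝ) (hapos : ∀ j, 0 < am j)
    (heig : ∀ j, (ptrace1 ρ).mulVec (ϕ j) = ((am j : ℝ) : ℂ) • ϕ j)
    (haval : ∀ j, ((am j : ℝ) : ℂ) = ∑ r : Fin n, mel φ ϕ ρ r r j j) :
    ((∀ (F : Matrix (Fin n) (Fin n) ℂ) (G : Matrix (Fin m) (Fin m) ℂ),
        (ρ * Emap s w (F ⊗ₖ (1 : Matrix (Fin m) (Fin m) ℂ)) *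
            ((1 : Matrix (Fin n) (Fin n) ℂ) ⊗ₖ G)).trace =
          ∑ i, ((lam i : ℝ) : ℂ) * (ρI i * F).trace * (ρII i * G).trace) ↔
      (∀ (k l : Fin n) (j i : Fin m),
        mel φ ϕ ρ l k j i =
          ∑ p : Fin n, ∑ q : Fin m,
            mel φ ϕ s p k j q * mel φ ϕ s l p q i *
              ((Real.sqrt (am j / am i) : ℝ) : ℂ))) :=
  factorization_criterion_general ρ s w lam ρI ρII hdec hρ hs hw hww φ hφ ϕ hϕ am hapos heig
end
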